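/- Let G be a metabelian, polycyclic, residually nilpotent group, and let Ĝ be its pronilpotent completion. Then for every s ∈ Ĝ and every b in the derived subgroup [Ĝ, Ĝ], the subgroup of Ĝ generated by the conjugates {s⁻ᵏ b sᵏ : k ∈ ℤ} of b by powers of s is a finitely generated abelian group. -/

import Mathlib

/-- A group is polycyclic iff it is solvable and all its subgroups are finitely generated. -/
def IsPolycyclic (G : Type*) [Group G] : Prop :=
  IsSolvable G ∧ ∀ H : Subgroup G, H.FG

/-- A group is metabelian if its derived subgroup is abelian. -/
def IsMetabelian (G : Type*) [Group G] : Prop :=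
  ∀ x y : G, x ∈ commutator G → y ∈ commutator G → x * y = y * x

/-- A group is residually nilpotent if the intersection of its lower central series is trivial.
(With Mathlib indexing, `γ_{n+1}(G) = lowerCentralSeries G n`.) -/
def IsResiduallyNilpotent (G : Type*) [Group G] : Prop :=
  (⨅ n : ℕ, (⊤ : Subgroup G).lowerCentralSeries n) = ⊥

/-- The natural projection `G/γ_{n+2}(G) → G/γ_{n+1}(G)` (with Mathlib indexing,
`γ_{k+1}(G) = lowerCentralSeries G k`). -/
def nilpotentQuotientMap (G : Type*) [Group G] (n : ℕ) :
    G ⧸ (⊤ : Subgroup G).lowerCentralSeries (n + 2) →* G ⧸ (⊤ : Subgroup G).lowerCentralSeries (n + 1) :=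
  QuotientGroup.map _ _ (MonoidHom.id G)
    (by simpa using (⊤ : Subgroup G).lowerCentralSeries_antitone (Nat.le_succ (n + 1)))

/-- The pronilpotent completion of `G`: the subgroup of `∏_{n ≥ 1} G/γ_{n+1}(G)` consisting of
coherent sequences. -/
def pronilpotentCompletion (G : Type*) [Group G] :
    Subgroup (Π n : ℕ, G ⧸ (⊤ : Subgroup G).lowerCentralSeries (n + 1)) where
  carrier := { f | ∀ n : ℕ, nilpotentQuotientMap G n (f (n + 1)) = f n }
  one_mem' := by intro n; exact map_one (nilpotentQuotientMap G n)
  mul_mem' := by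
    intro a b ha hb n
    simp only [Pi.mul_apply, map_mul, ha n, hb n]
  inv_mem' := by
    intro a ha n
    simp only [Pi.inv_apply, map_inv, ha n]

/-- The homomorphism `G/γ_{n+1}(G) → H/γ_{n+1}(H)` induced by `φ : G →* H` on the lower
central series quotients. -/
def lcsQuotientMap {G H : Type*} [Group G] [Group H] (φ : G →* H) (n : ℕ) :
    G ⧸ (⊤ : Subgroup G).lowerCentralSeries n →* H ⧸ (⊤ : Subgroup H).lowerCentralSeries n :=
  QuotientGroup.map _ _ φ
    (Subgroup.map_le_iff_le_comap.mp (Subgroup.lowerCentralSeries.map φ n))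

section Aux

variable {G : Type*} [Group G]

lemma conj_mem_commutator {m : G} (hm : m ∈ commutator G) (g : G) :
    g⁻¹ * m * g ∈ commutator G := by
  simpa [mul_assoc] using Subgroup.Normal.conj_mem inferInstance m hm g⁻¹

lemma zconj_mem_commutator {m : G} (hm : m ∈ commutator G) (g : G) (j : ℤ) :
    g ^ (-j) * m * g ^ j ∈ commutator G := by
  simpa [zpow_neg] using conj_mem_commutator hm (g ^ j)

lemma list_range_prod {α : Type*} [CommMonoid α] (f : ℕ → α) (N : ℕ) :
    ∏ i ∈ Finset.range N, f i = ((List.range N).map f).prod := by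
  induction N with
  | zero => simp
  | succ n ih => rw [Finset.prod_range_succ, List.range_succ]; simp [ih]

lemma cayley_hamilton_nat (hMeta : IsMetabelian G) (hPoly : IsPolycyclic G) (g : G) :
    ∃ N : ℕ, 1 ≤ N ∧ ∃ e : ℕ → ℤ, ∀ m ∈ commutator G,
      (g ^ N)⁻¹ * m * g ^ N =
        ((List.range N).map fun k => ((g ^ k)⁻¹ * m * g ^ k) ^ e k).prod := by
  set M := commutator G with hM
  letI : CommGroup ↥M :=
    { (inferInstance : Group ↥M) with
      mul_comm := fun a b => Subtype.ext (hMeta a b a.2 b.2) }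
  haveI : Group.FG ↥M := (Group.fg_iff_subgroup_fg M).mpr (hPoly.2 M)
  haveI : AddGroup.FG (Additive ↥M) := GroupFG.iff_add_fg.mp inferInstance
  haveI : Module.Finite ℤ (Additive ↥M) := Module.Finite.iff_addGroup_fg.mpr inferInstance
  let E : ↥M →* ↥M :=
    { toFun := fun m => ⟨g⁻¹ * ↑m * g, conj_mem_commutator m.2 g⟩
      map_one' := by ext; simp
      map_mul' := fun a b => by ext; simp [mul_assoc] }
  let φ : Module.End ℤ (Additive ↥M) := (MonoidHom.toAdditive E).toIntLinearMap
  obtain ⟨p, hp, hp0⟩ := LinearMap.exists_monic_and_aeval_eq_zero ℤ φ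
  set q : Polynomial ℤ := p * Polynomial.X with hq
  have hqm : q.Monic := hp.mul (Polynomial.monic_X)
  have hq0 : Polynomial.aeval φ q = 0 := by
    rw [hq, map_mul, hp0, zero_mul]
  set N := q.natDegree with hNdef
  have hN1 : 1 ≤ N := by
    rw [hNdef, hq, Polynomial.natDegree_mul_X hp.ne_zero]; omega
  have hsum : φ ^ N = ∑ i ∈ Finset.range N, (-(q.coeff i)) • φ ^ i := by
    have h1 := Polynomial.aeval_eq_sum_range (p := q) φ
    rw [hq0] at h1
    rw [Finset.sum_range_succ, hqm.coeff_natDegree, one_smul] at h1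
    have := eq_neg_of_add_eq_zero_right h1.symm
    rw [this, ← Finset.sum_neg_distrib]
    exact Finset.sum_congr rfl fun i _ => (neg_smul _ _).symm
  -- power formula
  have hpow : ∀ (k : ℕ) (x : ↥M),
      (((φ ^ k) (Additive.ofMul x)).toMul : G) = (g ^ k)⁻¹ * ↑x * g ^ k := by
    intro k
    induction k with
    | zero => intro x; simp
    | succ k ih =>
      intro x
      rw [pow_succ', Module.End.mul_apply]
      have h2 : ∀ y : Additive ↥M, ((φ y).toMul : G) = g⁻¹ * (y.toMul : G) * g := fun y => rfl
      rw [h2, ih x, pow_succ]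
      group
  refine ⟨N, hN1, fun k => -(q.coeff k), fun m hm => ?_⟩
  set x : ↥M := ⟨m, hm⟩ with hx
  have happ : (φ ^ N) (Additive.ofMul x)
      = ∑ i ∈ Finset.range N, (-(q.coeff i)) • ((φ ^ i) (Additive.ofMul x)) := by
    rw [hsum, LinearMap.sum_apply]
    exact Finset.sum_congr rfl fun i _ => rfl
  -- move to multiplicative ↥M
  have hmul : ((φ ^ N) (Additive.ofMul x)).toMul
      = ∏ i ∈ Finset.range N, (((φ ^ i) (Additive.ofMul x)).toMul) ^ (-(q.coeff i)) := by
    rw [happ, toMul_sum]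
    exact Finset.prod_congr rfl fun i _ => toMul_zsmul _ _
  have hlist : ((φ ^ N) (Additive.ofMul x)).toMul
      = ((List.range N).map fun i => (((φ ^ i) (Additive.ofMul x)).toMul) ^ (-(q.coeff i))).prod := by
    rw [hmul, list_range_prod]
  -- push to G
  have := congrArg (M.subtype) hlist
  rw [map_list_prod, List.map_map] at this
  rw [Subgroup.coe_subtype] at this
  have hL : ((List.range N).map ((fun x : ↥M => (x : G)) ∘ fun i => (((φ ^ i) (Additive.ofMul x)).toMul) ^ (-(q.coeff i)))).prod
      = ((List.range N).map fun k => ((g ^ k)⁻¹ * m * g ^ k) ^ (-(q.coeff k))).prod := by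
    congr 1
    apply List.map_congr_left
    intro i _
    show ((((φ ^ i) (Additive.ofMul x)).toMul ^ (-(q.coeff i)) : ↥M) : G) = _
    rw [SubgroupClass.coe_zpow, hpow i x]
  rw [hL] at this
  rw [← this, hpow N x]

lemma conj_pow_eq (hMeta : IsMetabelian G) {u m : G}
    (hu : u ∈ commutator G) (hm : m ∈ commutator G) (g : G) (j : ℤ) :
    (g * u) ^ (-j) * m * (g * u) ^ j = g ^ (-j) * m * g ^ j := by
  have hu1 : ((u : G ⧸ commutator G)) = 1 := (QuotientGroup.eq_one_iff u).mpr hu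
  have hh : (g ^ j)⁻¹ * (g * u) ^ j ∈ commutator G := by
    rw [← QuotientGroup.eq_one_iff ((g ^ j)⁻¹ * (g * u) ^ j)]
    rw [QuotientGroup.mk_mul, QuotientGroup.mk_inv, QuotientGroup.mk_zpow,
      QuotientGroup.mk_zpow, QuotientGroup.mk_mul, hu1, mul_one, inv_mul_cancel]
  have hm' : (g ^ j)⁻¹ * m * g ^ j ∈ commutator G := conj_mem_commutator hm (g ^ j)
  have hcomm := hMeta _ _ hm' hh
  have hkey : (g * u) ^ j = g ^ j * ((g ^ j)⁻¹ * (g * u) ^ j) := by group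
  rw [zpow_neg, zpow_neg, hkey, mul_inv_rev]
  rw [show ((g ^ j)⁻¹ * (g * u) ^ j)⁻¹ * (g ^ j)⁻¹ * m * (g ^ j * ((g ^ j)⁻¹ * (g * u) ^ j))
      = ((g ^ j)⁻¹ * (g * u) ^ j)⁻¹ * (((g ^ j)⁻¹ * m * g ^ j) * ((g ^ j)⁻¹ * (g * u) ^ j))
      from by group, hcomm]
  group

lemma cayley_hamilton (hMeta : IsMetabelian G) (hPoly : IsPolycyclic G) (g : G) :
    ∃ N : ℕ, 1 ≤ N ∧ ∃ e : ℕ → ℤ, ∀ m ∈ commutator G, ∀ j : ℤ,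
      g ^ (-(j + N)) * m * g ^ (j + N) =
        ((List.range N).map fun k : ℕ => (g ^ (-(j + (k:ℤ))) * m * g ^ (j + (k:ℤ))) ^ e k).prod := by
  obtain ⟨N, hN1, e, hCH⟩ := cayley_hamilton_nat hMeta hPoly g
  refine ⟨N, hN1, e, fun m hm j => ?_⟩
  have hm' : g ^ (-j) * m * g ^ j ∈ commutator G := zconj_mem_commutator hm g j
  have h2 : ∀ k : ℕ, (g ^ k)⁻¹ * (g ^ (-j) * m * g ^ j) * g ^ k
      = g ^ (-(j + (k:ℤ))) * m * g ^ (j + (k:ℤ)) := by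
    intro k
    rw [← zpow_natCast g k, ← zpow_neg]
    rw [show -(j + (k:ℤ)) = -(k:ℤ) + -j from by ring, show j + (k:ℤ) = j + (k:ℤ) from rfl]
    rw [zpow_add, zpow_add g j k]
    group
  have h1 := hCH _ hm'
  rw [h2 N] at h1
  rw [h1]
  congr 1
  apply List.map_congr_left
  intro k _
  rw [h2 k]

lemma commutator_coord {x : ↥(pronilpotentCompletion G)}
    (hx : x ∈ commutator ↥(pronilpotentCompletion G)) (n : ℕ) :
    ∃ m ∈ commutator G,
      (x : Π k : ℕ, G ⧸ (⊤ : Subgroup G).lowerCentralSeries (k + 1)) n = QuotientGroup.mk m := by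
  let Phi : ↥(pronilpotentCompletion G) →* G ⧸ (⊤ : Subgroup G).lowerCentralSeries (n + 1) :=
    (Pi.evalMonoidHom _ n).comp (pronilpotentCompletion G).subtype
  have h1 : Phi x ∈ Subgroup.map Phi (commutator ↥(pronilpotentCompletion G)) :=
    Subgroup.mem_map_of_mem Phi hx
  have h2 : Subgroup.map Phi (commutator ↥(pronilpotentCompletion G))
      ≤ commutator (G ⧸ (⊤ : Subgroup G).lowerCentralSeries (n + 1)) := by
    rw [commutator_def, Subgroup.map_commutator, commutator_def]
    exact Subgroup.commutator_mono le_top le_top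
  have h3 : commutator (G ⧸ (⊤ : Subgroup G).lowerCentralSeries (n + 1))
      = Subgroup.map (QuotientGroup.mk' ((⊤ : Subgroup G).lowerCentralSeries (n + 1))) (commutator G) := by
    rw [commutator_def, commutator_def, Subgroup.map_commutator,
      Subgroup.map_top_of_surjective _ (QuotientGroup.mk'_surjective _)]
  rw [h3] at h2
  obtain ⟨m, hm, hmx⟩ := h2 h1
  exact ⟨m, hm, hmx.symm⟩

lemma coord_coherent (s : ↥(pronilpotentCompletion G)) (n : ℕ) :
    ∃ x : G, (s : Π k : ℕ, G ⧸ (⊤ : Subgroup G).lowerCentralSeries (k + 1)) n = QuotientGroup.mk x ∧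
      (QuotientGroup.mk x : G ⧸ (⊤ : Subgroup G).lowerCentralSeries (0 + 1)) =
        (s : Π k : ℕ, G ⧸ (⊤ : Subgroup G).lowerCentralSeries (k + 1)) 0 := by
  have hs2 : ∀ k : ℕ, nilpotentQuotientMap G k
      ((s : Π k : ℕ, G ⧸ (⊤ : Subgroup G).lowerCentralSeries (k + 1)) (k + 1))
      = (s : Π k : ℕ, G ⧸ (⊤ : Subgroup G).lowerCentralSeries (k + 1)) k := s.2
  induction n with
  | zero =>
    obtain ⟨x, hx⟩ := QuotientGroup.mk_surjective
      ((s : Π k : ℕ, G ⧸ (⊤ : Subgroup G).lowerCentralSeries (k + 1)) 0)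
    exact ⟨x, hx.symm, hx⟩
  | succ n ih =>
    obtain ⟨x, hx, hx0⟩ := ih
    obtain ⟨y, hy⟩ := QuotientGroup.mk_surjective
      ((s : Π k : ℕ, G ⧸ (⊤ : Subgroup G).lowerCentralSeries (k + 1)) (n + 1))
    have hco := hs2 n
    rw [← hy] at hco
    have hmap : nilpotentQuotientMap G n (QuotientGroup.mk y)
        = (QuotientGroup.mk y : G ⧸ (⊤ : Subgroup G).lowerCentralSeries (n + 1)) :=
      QuotientGroup.map_mk _ _ _ _ y
    rw [hmap, hx] at hco
    have hyx : y⁻¹ * x ∈ (⊤ : Subgroup G).lowerCentralSeries (n + 1) := QuotientGroup.eq.mp hco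
    have hyx' : y⁻¹ * x ∈ (⊤ : Subgroup G).lowerCentralSeries (0 + 1) :=
      (⊤ : Subgroup G).lowerCentralSeries_antitone (by omega : 0 + 1 ≤ n + 1) hyx
    refine ⟨y, hy.symm, ?_⟩
    rw [← hx0]
    exact QuotientGroup.eq.mpr hyx'

lemma commutator_comm_pc (hMeta : IsMetabelian G) {x y : ↥(pronilpotentCompletion G)}
    (hx : x ∈ commutator ↥(pronilpotentCompletion G))
    (hy : y ∈ commutator ↥(pronilpotentCompletion G)) : x * y = y * x := by
  apply Subtype.ext
  funext n
  obtain ⟨m1, hm1, h1⟩ := commutator_coord hx n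
  obtain ⟨m2, hm2, h2⟩ := commutator_coord hy n
  show ((x : Π k : ℕ, G ⧸ (⊤ : Subgroup G).lowerCentralSeries (k + 1)) n)
      * ((y : Π k : ℕ, G ⧸ (⊤ : Subgroup G).lowerCentralSeries (k + 1)) n)
      = ((y : Π k : ℕ, G ⧸ (⊤ : Subgroup G).lowerCentralSeries (k + 1)) n)
      * ((x : Π k : ℕ, G ⧸ (⊤ : Subgroup G).lowerCentralSeries (k + 1)) n)
  rw [h1, h2, ← QuotientGroup.mk_mul, ← QuotientGroup.mk_mul, hMeta m1 m2 hm1 hm2]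

end Aux

/-- Let `G` be a metabelian, polycyclic, residually nilpotent group and `Ĝ` its pronilpotent
completion. For every `s ∈ Ĝ` and every `b` in the derived subgroup of `Ĝ`, the subgroup of
`Ĝ` generated by the conjugates of `b` by powers of `s` is a finitely generated abelian
group. -/
theorem stmt_16 {G : Type*} [Group G] (hMeta : IsMetabelian G) (hPoly : IsPolycyclic G)
    (hRes : IsResiduallyNilpotent G)
    (s b : ↥(pronilpotentCompletion G)) (hb : b ∈ commutator ↥(pronilpotentCompletion G)) :
    (Subgroup.closure (Set.range fun k : ℤ => s ^ (-k) * b * s ^ k)).FG ∧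
      ∀ x ∈ Subgroup.closure (Set.range fun k : ℤ => s ^ (-k) * b * s ^ k),
        ∀ y ∈ Subgroup.closure (Set.range fun k : ℤ => s ^ (-k) * b * s ^ k),
          x * y = y * x := by
  classical
  set c : ℤ → ↥(pronilpotentCompletion G) := fun k => s ^ (-k) * b * s ^ k with hc
  let Phi : ∀ n : ℕ, ↥(pronilpotentCompletion G) →* G ⧸ (⊤ : Subgroup G).lowerCentralSeries (n + 1) :=
    fun n => (Pi.evalMonoidHom _ n).comp (pronilpotentCompletion G).subtype
  obtain ⟨g, hg⟩ := QuotientGroup.mk_surjective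
    ((s : Π k : ℕ, G ⧸ (⊤ : Subgroup G).lowerCentralSeries (k + 1)) 0)
  have key : ∀ n : ℕ, ∃ m ∈ commutator G, ∀ j : ℤ,
      Phi n (c j) = QuotientGroup.mk (g ^ (-j) * m * g ^ j) := by
    intro n
    obtain ⟨m, hm, hbn⟩ := commutator_coord hb n
    obtain ⟨x, hx, hx0⟩ := coord_coherent s n
    have hgu : g⁻¹ * x ∈ commutator G := by
      have h1 : (QuotientGroup.mk g : G ⧸ (⊤ : Subgroup G).lowerCentralSeries (0 + 1)) = QuotientGroup.mk x := by
        rw [hg]; exact hx0.symm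
      have h2 := QuotientGroup.eq.mp h1
      have h3 : (⊤ : Subgroup G).lowerCentralSeries (0 + 1) = commutator G := Subgroup.top_lowerCentralSeries_one
      rw [h3] at h2
      exact h2
    refine ⟨m, hm, fun j => ?_⟩
    have hcj : Phi n (c j)
        = ((s : Π k : ℕ, G ⧸ (⊤ : Subgroup G).lowerCentralSeries (k + 1)) n) ^ (-j)
          * ((b : Π k : ℕ, G ⧸ (⊤ : Subgroup G).lowerCentralSeries (k + 1)) n)
          * ((s : Π k : ℕ, G ⧸ (⊤ : Subgroup G).lowerCentralSeries (k + 1)) n) ^ j := rfl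
    rw [hcj, hx, hbn]
    rw [show x = g * (g⁻¹ * x) from by group]
    rw [← QuotientGroup.mk_zpow, ← QuotientGroup.mk_zpow, ← QuotientGroup.mk_mul,
      ← QuotientGroup.mk_mul]
    exact congrArg _ (conj_pow_eq hMeta hgu hm g j)
  obtain ⟨N, hN1, e, hCH⟩ := cayley_hamilton hMeta hPoly g
  obtain ⟨N', hN'1, e', hCH'⟩ := cayley_hamilton hMeta hPoly g⁻¹
  have hmk : ∀ n : ℕ, ∀ l : List G,
      (QuotientGroup.mk l.prod : G ⧸ (⊤ : Subgroup G).lowerCentralSeries (n + 1))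
        = (l.map (QuotientGroup.mk)).prod := by
    intro n l
    induction l with
    | nil => simp; rfl
    | cons a t ih => simp only [List.prod_cons, List.map_cons, QuotientGroup.mk_mul, ih]
  have hrelup : ∀ j : ℤ,
      c (j + N) = ((List.range N).map fun k : ℕ => (c (j + (k : ℤ))) ^ e k).prod := by
    intro j
    apply Subtype.ext
    funext n
    obtain ⟨m, hm, hkey⟩ := key n
    show Phi n (c (j + N))
      = Phi n (((List.range N).map fun k : ℕ => (c (j + (k : ℤ))) ^ e k).prod)
    rw [map_list_prod, List.map_map, hkey, hCH m hm j, hmk, List.map_map]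
    congr 1
    apply List.map_congr_left
    intro k _
    show QuotientGroup.mk ((g ^ (-(j + (k:ℤ))) * m * g ^ (j + (k:ℤ))) ^ e k)
      = Phi n ((c (j + (k:ℤ))) ^ e k)
    rw [map_zpow, hkey, QuotientGroup.mk_zpow]
  have hinv : ∀ t : ℤ, (g⁻¹) ^ t = g ^ (-t) := fun t => by rw [inv_zpow, ← zpow_neg]
  have hreldown : ∀ j : ℤ,
      c (-(j + N')) = ((List.range N').map fun k : ℕ => (c (-(j + (k : ℤ)))) ^ e' k).prod := by
    intro j
    apply Subtype.ext
    funext n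
    obtain ⟨m, hm, hkey⟩ := key n
    show Phi n (c (-(j + N')))
      = Phi n (((List.range N').map fun k : ℕ => (c (-(j + (k : ℤ)))) ^ e' k).prod)
    have hCH2 := hCH' m hm j
    simp only [hinv, neg_neg] at hCH2
    rw [map_list_prod, List.map_map]
    have hk1 := hkey (-(j + N'))
    rw [neg_neg] at hk1
    rw [hk1, hCH2, hmk, List.map_map]
    congr 1
    apply List.map_congr_left
    intro k _
    show QuotientGroup.mk ((g ^ (j + (k:ℤ)) * m * g ^ (-(j + (k:ℤ)))) ^ e' k)
      = Phi n ((c (-(j + (k:ℤ)))) ^ e' k)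
    rw [map_zpow]
    have hk2 := hkey (-(j + (k:ℤ)))
    rw [neg_neg] at hk2
    rw [hk2, QuotientGroup.mk_zpow]
  set K : Subgroup ↥(pronilpotentCompletion G) :=
    Subgroup.closure (c '' Set.Icc (-(N' : ℤ)) (N : ℤ)) with hK
  have main : ∀ d : ℕ, ∀ j : ℤ, -(N' : ℤ) - d ≤ j → j ≤ (N : ℤ) + d → c j ∈ K := by
    intro d
    induction d with
    | zero =>
      intro j h1 h2
      apply Subgroup.subset_closure
      exact ⟨j, Set.mem_Icc.mpr ⟨by simpa using h1, by simpa using h2⟩, rfl⟩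
    | succ d ih =>
      intro j h1 h2
      rcases lt_or_ge ((N : ℤ) + d) j with h | h
      · have hrel := hrelup (j - N)
        rw [show j - (N : ℤ) + N = j from by ring] at hrel
        rw [hrel]
        apply Subgroup.list_prod_mem
        intro x hx
        obtain ⟨k, hk, rfl⟩ := List.mem_map.mp hx
        have hkN := List.mem_range.mp hk
        exact Subgroup.zpow_mem _ (ih (j - N + k) (by omega) (by omega)) _
      · rcases lt_or_ge j (-(N' : ℤ) - d) with h' | h'
        · have hrel := hreldown (-j - N')
          rw [show -(-j - (N' : ℤ) + N') = j from by ring] at hrel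
          rw [hrel]
          apply Subgroup.list_prod_mem
          intro x hx
          obtain ⟨k, hk, rfl⟩ := List.mem_map.mp hx
          have hkN := List.mem_range.mp hk
          have : -(-j - (N' : ℤ) + k) = j + N' - k := by ring
          rw [this]
          exact Subgroup.zpow_mem _ (ih (j + N' - k) (by omega) (by omega)) _
        · exact ih j h' h
  have hrange : ∀ j : ℤ, c j ∈ K := fun j =>
    main (j.natAbs + N + N') j (by omega) (by omega)
  have hKeq : Subgroup.closure (Set.range c) = K :=
    le_antisymm ((Subgroup.closure_le _).mpr (by rintro x ⟨j, rfl⟩; exact hrange j))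
      (Subgroup.closure_mono (Set.image_subset_range _ _))
  have hsub : Subgroup.closure (Set.range c) ≤ commutator ↥(pronilpotentCompletion G) :=
    (Subgroup.closure_le _).mpr (by rintro x ⟨j, rfl⟩; exact zconj_mem_commutator hb s j)
  refine ⟨?_, fun x hx y hy => commutator_comm_pc hMeta (hsub hx) (hsub hy)⟩
  rw [hKeq]
  exact (Subgroup.fg_iff _).mpr
    ⟨c '' Set.Icc (-(N' : ℤ)) (N : ℤ), rfl, (Set.finite_Icc _ _).image c⟩
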